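/- arXiv:1609.03314 — 2 statements merged into one kernel-verified Lean document; each statement's English description precedes it below -/
import Mathlib

section
/- Let (g, ω) be a symplectic Lie algebra (a real Lie algebra with a closed nondegenerate 2-form ω). If the center z of g is nondegenerate with respect to ω, then g decomposes as the direct sum of symplectic Lie algebras g = (z, ω|_z) ⊕ (z^⊥, ω|_{z^⊥}), where z^⊥ is the ω-orthogonal complement of z; in particular z^⊥ is an ideal with trivial center. -/
namespace Stmt0

variable {g : Type*} [LieRing g] [LieAlgebra ℝ g]

/-- The center of `g` as a submodule. -/
def zc (g : Type*) [LieRing g] [LieAlgebra ℝ g] : Submodule ℝ g where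
  carrier := {x | ∀ y : g, ⁅x, y⁆ = 0}
  add_mem' := fun hx hy => by intro z; rw [add_lie, hx z, hy z, add_zero]
  zero_mem' := fun z => zero_lie z
  smul_mem' := fun c x hx => by intro z; rw [smul_lie, hx z, smul_zero]

/-- The `ω`-orthogonal complement of a submodule. -/
def orth (ω : g →ₗ[ℝ] g →ₗ[ℝ] ℝ) (U : Submodule ℝ g) : Submodule ℝ g where
  carrier := {x | ∀ y ∈ U, ω x y = 0}
  add_mem' := fun hx hy => by
    intro z hz; rw [map_add, LinearMap.add_apply, hx z hz, hy z hz, add_zero]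
  zero_mem' := fun z _ => by rw [map_zero, LinearMap.zero_apply]
  smul_mem' := fun c x hx => by
    intro z hz; rw [map_smul, LinearMap.smul_apply, hx z hz, smul_zero]

/-- a symplectic Lie algebra with nondegenerate center decomposes as the
direct sum of the center and its orthogonal complement; the latter is an ideal with
trivial center on which `ω` restricts nondegenerately. -/
theorem symplectic_nondeg_center_decomposition
    [FiniteDimensional ℝ g]
    (ω : g →ₗ[ℝ] g →ₗ[ℝ] ℝ)
    (hskew : ∀ X Y : g, ω X Y = - ω Y X)
    (hnd : ∀ X : g, (∀ Y : g, ω X Y = 0) → X = 0)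
    (hclosed : ∀ X Y Z : g, ω ⁅X, Y⁆ Z - ω ⁅X, Z⁆ Y + ω ⁅Y, Z⁆ X = 0)
    (hznd : ∀ X ∈ zc g, (∀ Y ∈ zc g, ω X Y = 0) → X = 0) :
    IsCompl (zc g) (orth ω (zc g)) ∧
      (∀ X : g, ∀ Y ∈ orth ω (zc g), ⁅X, Y⁆ ∈ orth ω (zc g)) ∧
      (∀ X ∈ orth ω (zc g), (∀ Y ∈ orth ω (zc g), ⁅X, Y⁆ = 0) → X = 0) ∧
      (∀ X ∈ orth ω (zc g), (∀ Y ∈ orth ω (zc g), ω X Y = 0) → X = 0) := by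

  -- `ω` is reflexive
  have hrefl : LinearMap.IsRefl ω := fun x y h => by
    rw [hskew]; simp [h]
  -- membership in `orth`
  have horthmem : ∀ (U : Submodule ℝ g) (x : g), x ∈ orth ω U ↔ ∀ y ∈ U, ω x y = 0 :=
    fun U x => Iff.rfl
  have hzmem : ∀ x : g, x ∈ zc g ↔ ∀ y : g, ⁅x, y⁆ = 0 := fun x => Iff.rfl
  -- `orth ω U` equals the mathlib orthogonal complement
  have horth : orth ω (zc g) = LinearMap.BilinForm.orthogonal ω (zc g) := by
    ext x
    constructor
    · intro hx y hy
      exact hrefl x y (hx y hy)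
    · intro hx y hy
      exact hrefl y x (hx y hy)
  -- the restriction of ω to the center is nondegenerate
  have hres : (LinearMap.BilinForm.restrict ω (zc g)).Nondegenerate := by
    refine ⟨?_, ?_⟩
    · rintro ⟨x, hx⟩ hy
      ext
      exact hznd x hx (fun z hz => hy ⟨z, hz⟩)
    · rintro ⟨x, hx⟩ hy
      ext
      exact hznd x hx (fun z hz => hrefl _ _ (hy ⟨z, hz⟩))
  have hcompl : IsCompl (zc g) (orth ω (zc g)) := by
    rw [horth]
    exact LinearMap.BilinForm.isCompl_orthogonal_of_restrict_nondegenerate hrefl hres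
  -- bracket lands in orth
  have hbr : ∀ X Y : g, ⁅X, Y⁆ ∈ orth ω (zc g) := by
    intro X Y z hz
    have h1 := hclosed X Y z
    have h2 : ⁅X, z⁆ = (0 : g) := by
      have := lie_skew X z
      rw [hz X] at this
      simpa using this.symm
    have h3 : ⁅Y, z⁆ = (0 : g) := by
      have := lie_skew Y z
      rw [hz Y] at this
      simpa using this.symm
    rw [h2, h3] at h1
    simpa using h1
  refine ⟨hcompl, fun X Y _ => hbr X Y, ?_, ?_⟩
  · -- trivial center of orth
    intro X hX hXc
    have hXz : X ∈ zc g := by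
      intro y
      obtain ⟨z, hz, w, hw, rfl⟩ := Submodule.mem_sup.1
        (hcompl.sup_eq_top ▸ Submodule.mem_top : y ∈ zc g ⊔ orth ω (zc g))
      have hz' : ⁅X, z⁆ = (0 : g) := by
        have := lie_skew X z
        rw [hz X] at this
        simpa using this.symm
      rw [lie_add, hz', zero_add]
      exact hXc w hw
    exact hznd X hXz (fun y hy => hX y hy)
  · -- nondegeneracy on orth
    intro X hX hXo
    apply hnd
    intro Y
    obtain ⟨z, hz, w, hw, rfl⟩ := Submodule.mem_sup.1
      (hcompl.sup_eq_top ▸ Submodule.mem_top : Y ∈ zc g ⊔ orth ω (zc g))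
    rw [map_add, hX z hz, hXo w hw, add_zero]


end Stmt0
end

section
/- Let l be an abelian Lie algebra, (a, [·,·]_a, ω_a) a symplectic Lie algebra, ξ : l → gl(a) linear with ξ(L) a derivation of a for every L, and define β(A₁,A₂) := −ω_a(ξ(·)A₁, A₂) − ω_a(A₁, ξ(·)A₂) ∈ l*. Then for all A₁, A₂, A₃ ∈ a, the cyclic sum β([A₁,A₂]_a, A₃) + β([A₂,A₃]_a, A₁) + β([A₃,A₁]_a, A₂) = 0. -/
namespace Stmt5

/-- for a symplectic Lie algebra `(a, ω_a)` and a family `ξ` of derivations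
of `a` indexed linearly by `l`, the form `β(A₁,A₂) = L ↦ −ω_a(ξ(L)A₁,A₂) − ω_a(A₁,ξ(L)A₂)`
satisfies the cyclic identity `β([A₁,A₂],A₃) + β([A₂,A₃],A₁) + β([A₃,A₁],A₂) = 0`. -/
theorem beta_cyclic
    {l a : Type*} [LieRing l] [LieAlgebra ℝ l] [LieRing a] [LieAlgebra ℝ a]
    (habel : ∀ X Y : l, ⁅X, Y⁆ = 0)
    (ωa : a →ₗ[ℝ] a →ₗ[ℝ] ℝ)
    (hskew : ∀ X Y : a, ωa X Y = - ωa Y X)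
    (hnd : ∀ X : a, (∀ Y : a, ωa X Y = 0) → X = 0)
    (hclosed : ∀ X Y Z : a, ωa ⁅X, Y⁆ Z - ωa ⁅X, Z⁆ Y + ωa ⁅Y, Z⁆ X = 0)
    (ξ : l →ₗ[ℝ] (a →ₗ[ℝ] a))
    (hder : ∀ (L : l) (X Y : a), ξ L ⁅X, Y⁆ = ⁅ξ L X, Y⁆ + ⁅X, ξ L Y⁆)
    (β : a → a → l → ℝ)
    (hβ : ∀ (A₁ A₂ : a) (L : l), β A₁ A₂ L = - ωa (ξ L A₁) A₂ - ωa A₁ (ξ L A₂)) :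
    ∀ (A₁ A₂ A₃ : a) (L : l),
      β ⁅A₁, A₂⁆ A₃ L + β ⁅A₂, A₃⁆ A₁ L + β ⁅A₃, A₁⁆ A₂ L = 0 := by
  intro A₁ A₂ A₃ L
  have hsk : ∀ X Y Z : a, ωa ⁅X, Y⁆ Z = - ωa ⁅Y, X⁆ Z := by
    intro X Y Z
    rw [← lie_skew, map_neg, LinearMap.neg_apply]
  simp only [hβ, hder, map_add, LinearMap.add_apply]
  linear_combination (-1 : ℝ) * hclosed (ξ L A₁) A₂ A₃ - hclosed A₁ (ξ L A₂) A₃ -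
    hclosed A₁ A₂ (ξ L A₃) - hsk A₃ (ξ L A₁) A₂ - hsk (ξ L A₃) A₁ A₂ - hsk A₃ A₁ (ξ L A₂)

end Stmt5
end
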